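/- Let U be a unitary k×k complex matrix, let P be an orthogonal projection on ℂ^k, and let 0 ≤ δ ≤ 0.6 satisfy ‖[P, U]‖ ≤ δ. Let T be the compression of U to range(P), i.e. the map v ↦ P U v on range(P). Then T is invertible and ‖polar(T) − T‖ ≤ δ², where polar(T) = T (T†T)^{−1/2}. -/

import Mathlib

/-!
For `v ∈ range P` we have `U v - P U v = (U P - P U) v`, so Pythagoras gives
`‖T v‖² = ‖v‖² - ‖(U P - P U) v‖² ∈ [(1 - δ²) ‖v‖², ‖v‖²]`, i.e. `1 - δ² ≤ T†T ≤ 1`.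
With `S = (T†T)^{1/2}`, the polar part `Q = T S⁻¹` is an isometry and `polar T - T = Q (1 - S)`.
On the spectrum of `T†T`, which lies in `[1 - δ², 1]`, we have `0 ≤ 1 - √t ≤ 1 - t ≤ δ²`,
so `‖1 - S‖ ≤ δ²`. The second half of the argument works in any unital C⋆-algebra.
-/

/-- The polar part of an operator on a Hilbert space: `polar X = X (X†X)^{-1/2}`,
where the inverse square root is computed by the functional calculus (`Ring.inverse`
of the positive square root). -/
noncomputable def polarCLM {V : Type*} [NormedAddCommGroup V] [InnerProductSpace ℂ V]
    [CompleteSpace V] (T : V →L[ℂ] V) : V →L[ℂ] V :=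
  T * Ring.inverse (cfc Real.sqrt (star T * T))

/-- The compression of an operator `U` to the range of `P`: the map `v ↦ P (U v)`
on `range P`. -/
noncomputable def compress {E : Type*} [NormedAddCommGroup E] [InnerProductSpace ℂ E]
    (P U : E →L[ℂ] E) : (LinearMap.range (P : E →ₗ[ℂ] E)) →L[ℂ] (LinearMap.range (P : E →ₗ[ℂ] E)) :=
  ((P ∘L U) ∘L (LinearMap.range (P : E →ₗ[ℂ] E)).subtypeL).codRestrict (LinearMap.range (P : E →ₗ[ℂ] E))
    (fun v => LinearMap.mem_range.mpr ⟨U v, rfl⟩)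

namespace CStarAlgebra

-- On `V →L[ℂ] V` this is `polarCLM` by definition.
noncomputable def polar {A : Type*} [CStarAlgebra A] (x : A) : A :=
  x * Ring.inverse (cfc Real.sqrt (star x * x))

variable {A : Type*} [CStarAlgebra A]

lemma norm_one_sub_cfc_sqrt_le {a : A} {ε : ℝ} (hε : 0 ≤ ε)
    (ha : spectrum ℝ a ⊆ Set.Icc (1 - ε) 1) (ha' : IsSelfAdjoint a := by cfc_tac) :
    ‖1 - cfc Real.sqrt a‖ ≤ ε := by
  rw [← cfc_one ℝ a, ← cfc_sub ..]
  refine norm_cfc_le hε fun t ht => ?_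
  obtain ⟨ht_ge, ht_le⟩ := ha ht
  have h_le_sqrt : t ≤ Real.sqrt t := Real.le_sqrt_self_iff.mpr ht_le
  have h_sqrt_le : Real.sqrt t ≤ 1 := Real.sqrt_le_one.mpr ht_le
  rw [Pi.one_apply, Real.norm_eq_abs, abs_of_nonneg (by linarith)]
  linarith

variable [PartialOrder A] [StarOrderedRing A]

lemma cfc_sqrt_eq_sqrt {a : A} (ha : 0 ≤ a) : cfc Real.sqrt a = CFC.sqrt a :=
  ((CFC.sqrt_eq_real_sqrt a).trans cfcₙ_eq_cfc).symm

lemma polar_mul_cfc_sqrt {x : A} (hx : IsUnit (star x * x)) :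
    polar x * cfc Real.sqrt (star x * x) = x := by
  rw [polar, mul_assoc, Ring.inverse_mul_cancel _ ?_, mul_one]
  rwa [cfc_sqrt_eq_sqrt (star_mul_self_nonneg x), CFC.isUnit_sqrt_iff (star x * x)]

lemma star_polar_mul_polar {x : A} (hx : IsUnit (star x * x)) :
    star (polar x) * polar x = 1 := by
  rw [polar, cfc_sqrt_eq_sqrt (star_mul_self_nonneg x), star_mul, ← Ring.inverse_star,
    (IsSelfAdjoint.of_nonneg (CFC.sqrt_nonneg _)).star_eq]
  set S := CFC.sqrt (star x * x)
  have hS : IsUnit S := (CFC.isUnit_sqrt_iff _).mpr hx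
  calc Ring.inverse S * star x * (x * Ring.inverse S)
      = Ring.inverse S * (S * S) * Ring.inverse S := by
        rw [CFC.sqrt_mul_sqrt_self (star x * x)]; noncomm_ring
    _ = 1 := by
        rw [← mul_assoc, Ring.inverse_mul_cancel _ hS, one_mul, Ring.mul_inverse_cancel _ hS]

lemma norm_polar_le_one {x : A} (hx : IsUnit (star x * x)) : ‖polar x‖ ≤ 1 := by
  nontriviality A
  have h := CStarRing.norm_star_mul_self (x := polar x)
  rw [star_polar_mul_polar hx, CStarRing.norm_one] at h
  nlinarith [norm_nonneg (polar x)]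

lemma spectrum_star_mul_self_subset_Icc {x : A} {c : ℝ} (hx : ‖x‖ ≤ 1)
    (hc : algebraMap ℝ A c ≤ star x * x) : spectrum ℝ (star x * x) ⊆ Set.Icc c 1 := by
  intro t ht
  refine ⟨(algebraMap_le_iff_le_spectrum (a := star x * x)).mp hc t ht, ?_⟩
  have h := (le_algebraMap_iff_spectrum_le (a := star x * x)).mp
    star_mul_le_algebraMap_norm_sq t ht
  nlinarith [norm_nonneg x]

theorem norm_polar_sub_le {x : A} {ε : ℝ} (hε0 : 0 ≤ ε) (hε1 : ε < 1) (hx : ‖x‖ ≤ 1)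
    (hx' : algebraMap ℝ A (1 - ε) ≤ star x * x) : ‖polar x - x‖ ≤ ε := by
  have hspec := spectrum_star_mul_self_subset_Icc hx hx'
  have hunit : IsUnit (star x * x) := by
    rw [← spectrum.zero_notMem_iff ℝ]
    intro h0
    linarith [(hspec h0).1]
  calc ‖polar x - x‖ = ‖polar x * (1 - cfc Real.sqrt (star x * x))‖ := by
        rw [mul_sub, mul_one, polar_mul_cfc_sqrt hunit]
    _ ≤ ‖polar x‖ * ‖1 - cfc Real.sqrt (star x * x)‖ := norm_mul_le _ _
    _ ≤ 1 * ε := mul_le_mul (norm_polar_le_one hunit)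
        (norm_one_sub_cfc_sqrt_le hε0 hspec) (norm_nonneg _) zero_le_one
    _ = ε := one_mul ε

end CStarAlgebra

section HilbertSpace

open ContinuousLinearMap

variable {H : Type*} [NormedAddCommGroup H] [InnerProductSpace ℂ H] [CompleteSpace H]

lemma ContinuousLinearMap.algebraMap_le_star_mul_self_iff (T : H →L[ℂ] H) (c : ℝ) :
    algebraMap ℝ (H →L[ℂ] H) c ≤ star T * T ↔ ∀ v, c * ‖v‖ ^ 2 ≤ ‖T v‖ ^ 2 := by
  have hsa : IsSelfAdjoint (star T * T - algebraMap ℝ (H →L[ℂ] H) c) :=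
    (IsSelfAdjoint.star_mul_self T).sub (.algebraMap _ (.all c))
  have hre (v : H) : (star T * T - algebraMap ℝ (H →L[ℂ] H) c).reApplyInnerSelf v =
      ‖T v‖ ^ 2 - c * ‖v‖ ^ 2 := by
    rw [reApplyInnerSelf_apply, sub_apply, inner_sub_left, map_sub, star_eq_adjoint,
      mul_apply_eq_comp, adjoint_inner_left, Algebra.algebraMap_eq_smul_one, smul_apply,
      one_apply_eq_self, inner_smul_left_eq_smul, RCLike.smul_re, inner_self_eq_norm_sq,
      inner_self_eq_norm_sq]
  simp only [le_def, isPositive_def', hsa, true_and, hre, sub_nonneg]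

lemma IsStarProjection.norm_apply_sq_add_norm_sub_apply_sq {P : H →L[ℂ] H}
    (hP : IsStarProjection P) (w : H) : ‖P w‖ ^ 2 + ‖w - P w‖ ^ 2 = ‖w‖ ^ 2 := by
  obtain ⟨K, _, rfl⟩ := isStarProjection_iff_eq_starProjection.mp hP
  rw [K.norm_sq_eq_add_norm_sq_starProjection w, K.starProjection_orthogonal_val]

end HilbertSpace

open ContinuousLinearMap CStarAlgebra

lemma norm_compress_apply_sq_add {E : Type*} [NormedAddCommGroup E] [InnerProductSpace ℂ E]
    [CompleteSpace E] {P U : E →L[ℂ] E} (hP : IsStarProjection P)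
    (hU : U ∈ unitary (E →L[ℂ] E)) (v : LinearMap.range (P : E →ₗ[ℂ] E)) :
    ‖compress P U v‖ ^ 2 + ‖(U * P - P * U) v‖ ^ 2 = ‖v‖ ^ 2 := by
  have hPv : P v = v := by
    obtain ⟨u, hu⟩ := v.2
    rw [← hu]
    exact congr($hP.isIdempotentElem.eq u)
  have hcomm : (U * P - P * U) v = U v - P (U v) := by simp [hPv]
  have h := hP.norm_apply_sq_add_norm_sub_apply_sq (U v)
  rwa [norm_map_of_mem_unitary hU, ← hcomm] at h

theorem stmt5
    (E : Type*) [NormedAddCommGroup E] [InnerProductSpace ℂ E] [FiniteDimensional ℂ E]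
    (U : E →L[ℂ] E) (hU : U ∈ unitary (E →L[ℂ] E))
    (P : E →L[ℂ] E) (hPsa : IsSelfAdjoint P) (hPproj : P * P = P)
    (δ : ℝ) (hδ0 : 0 ≤ δ) (hδ1 : δ ≤ 0.6)
    (hPU : ‖P * U - U * P‖ ≤ δ) :
    IsUnit (compress P U) ∧ ‖polarCLM (compress P U) - compress P U‖ ≤ δ ^ 2 := by
  set T := compress P U
  have hpyth := norm_compress_apply_sq_add ⟨hPproj, hPsa⟩ hU
  have hcomm (v : LinearMap.range (P : E →ₗ[ℂ] E)) : ‖(U * P - P * U) v‖ ≤ δ * ‖v‖ :=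
    calc ‖(U * P - P * U) v‖ ≤ ‖U * P - P * U‖ * ‖(v : E)‖ := le_opNorm _ _
      _ ≤ δ * ‖v‖ := by rw [norm_sub_rev]; exact mul_le_mul_of_nonneg_right hPU (norm_nonneg _)
  have hδ : δ ^ 2 < 1 := by nlinarith
  have hT_lower (v) : (1 - δ ^ 2) * ‖v‖ ^ 2 ≤ ‖T v‖ ^ 2 := by
    nlinarith [hpyth v, hcomm v, norm_nonneg ((U * P - P * U) v)]
  have hT_norm : ‖T‖ ≤ 1 := opNorm_le_bound _ zero_le_one fun v => by
    rw [one_mul, ← pow_le_pow_iff_left₀ (norm_nonneg _) (norm_nonneg _) two_ne_zero]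
    nlinarith [hpyth v]
  have hT_inj : Function.Injective T := (injective_iff_map_eq_zero T).mpr fun v hv => by
    have h := hT_lower v
    rw [hv, norm_zero, zero_pow two_ne_zero] at h
    exact norm_eq_zero.mp ((sq_nonpos_iff _).mp (nonpos_of_mul_nonpos_right h (sub_pos.mpr hδ)))
  exact ⟨isUnit_iff_bijective.mpr ⟨hT_inj, LinearMap.injective_iff_surjective.mp hT_inj⟩,
    norm_polar_sub_le (sq_nonneg δ) hδ hT_norm
      ((algebraMap_le_star_mul_self_iff T _).mpr hT_lower)⟩
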